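/- Given reals ρ₀ ≠ 0 and ρ₁, ρ₂, …, set x_r := −(2r+1)!!·ρ_r/((r+1)·ρ₀), and for integers B ≥ 3 and 0 ≤ M ≤ B−3 define γ^M_B := ρ₀^{−(B−3)}·Σ_{K=0}^{B−3−M} ((B−3+K)!/((B−3−M)!·M!))·B_{B−3−M,K}(x₁,…,x_{B−2−M−K}); set γ^M_B := 0 when M < 0 or M > B−3. Then for every B ≥ 4 and every 0 ≤ M ≤ B−4: Σ_{j=0}^{B−4−M} C(M+1+j, j+1)·(2j+3)!!·ρ_j·γ^{M+1+j}_B = (2M+B−1)·γ^M_{B−1}, where C(·,·) is the binomial coefficient and (2j+3)!! := (2j+3)!/(2^{j+1}·(j+1)!). -/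

import Mathlib

/-!
Write `x_r = -(2r+1)!!·ρ_r/((r+1)·ρ₀)` (`bellArg ρs r`), so that `x₀ = -1`, and
`S_n(N) = Σ_K (N+K)!·B_{n,K}(x)` (`bellFactorialSum n N x`). Then
`γ^M_B = ρ₀^{-(B-3)}·S_{B-3-M}(B-3)/((B-3-M)!·M!)`, and after substituting
`(2j+3)!!·ρ_j = -(2j+3)(j+1)·ρ₀·x_j` the recursion with `B = M+n+4`, `N = M+n` becomes
`Σ_{j≤n} (2j+3)·C(n,j)·x_j·S_{n-j}(N+1) = (2n - 3(N+1))·S_n(N)`.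
Apart from `j = 0`, the left side is a combination of the identities
`Σ_m C(n,m)·x_m·B_{n-m,k} = (k+1)·B_{n,k+1}` and `Σ_m m·C(n,m)·x_m·B_{n-m,k} = n·B_{n,k+1}`:
in the multi-index sum for `B_{n,k+1}`, the `m`-th summand counts each multi-index `j` exactly
`j_m` times, and `Σ_m j_m = k+1`, `Σ_m m·j_m = n`.
-/

/-- The partial Bell polynomial `B_{n,k}(x₁,…,x_{n−k+1})`, defined by the explicit sum
`Σ n!/(j₁!⋯j_{n−k+1}!)·∏ᵢ(xᵢ/i!)^{jᵢ}` over nonnegative integers `j₁,…,j_{n−k+1}` with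
`j₁+⋯+j_{n−k+1} = k` and `1j₁+2j₂+⋯+(n−k+1)j_{n−k+1} = n`. -/
noncomputable def bellPoly (n k : ℕ) (x : ℕ → ℝ) : ℝ :=
  ∑ j ∈ (Finset.Nat.antidiagonalTuple (n - k + 1) k).filter
      (fun j : Fin (n - k + 1) → ℕ => ∑ i : Fin (n - k + 1), ((i : ℕ) + 1) * j i = n),
    (n.factorial : ℝ) / (∏ i : Fin (n - k + 1), ((j i).factorial : ℝ)) *
      ∏ i : Fin (n - k + 1), (x ((i : ℕ) + 1) / (((i : ℕ) + 1).factorial : ℝ)) ^ (j i)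

/-- The odd double factorial `(2j+1)!! = (2j+1)!/(2^j·j!)` as a real number. -/
noncomputable def df (j : ℕ) : ℝ := ((2 * j + 1).factorial : ℝ) / (2 ^ j * (j.factorial : ℝ))

/-- The coefficients `γ^M_B` built from a sequence `ρ₀, ρ₁, …`:
`γ^M_B = ρ₀^{−(B−3)}·Σ_{K=0}^{B−3−M} ((B−3+K)!/((B−3−M)!·M!))·B_{B−3−M,K}(x₁,…)` with
`x_r = −(2r+1)!!·ρ_r/((r+1)·ρ₀)`, for `B ≥ 3` and `0 ≤ M ≤ B−3`, and `γ^M_B = 0`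
for `M` out of this range. -/
noncomputable def gam (ρs : ℕ → ℝ) (B : ℕ) (M : ℤ) : ℝ :=
  if 3 ≤ B ∧ 0 ≤ M ∧ M ≤ (B : ℤ) - 3 then
    (ρs 0 ^ (B - 3))⁻¹ *
      ∑ K ∈ Finset.range (B - 3 - M.toNat + 1),
        ((B - 3 + K).factorial : ℝ) /
            (((B - 3 - M.toNat).factorial : ℝ) * (M.toNat.factorial : ℝ)) *
          bellPoly (B - 3 - M.toNat) K (fun r => -(df r * ρs r) / ((r + 1) * ρs 0))
  else 0

open Finset

namespace PartialBell

variable {L n k : ℕ}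

def multiIndices (L n k : ℕ) : Finset (Fin L → ℕ) :=
  (Finset.Nat.antidiagonalTuple L k).filter
    fun j : Fin L → ℕ => ∑ i : Fin L, ((i : ℕ) + 1) * j i = n

noncomputable def term (L n : ℕ) (x : ℕ → ℝ) (j : Fin L → ℕ) : ℝ :=
  (n.factorial : ℝ) / (∏ i, ((j i).factorial : ℝ)) *
    ∏ i : Fin L, (x ((i : ℕ) + 1) / (((i : ℕ) + 1).factorial : ℝ)) ^ (j i)

/-- The sum defining `bellPoly n k x`, taken over multi-indices of any length `L`. -/
noncomputable def bellPolyFin (L n k : ℕ) (x : ℕ → ℝ) : ℝ :=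
  ∑ j ∈ multiIndices L n k, term L n x j

theorem mem_multiIndices {j : Fin L → ℕ} :
    j ∈ multiIndices L n k ↔ ∑ i : Fin L, j i = k ∧ ∑ i : Fin L, ((i : ℕ) + 1) * j i = n := by
  simp [multiIndices, Finset.Nat.mem_antidiagonalTuple]

theorem sum_succ_mul_eq_sum_mul_add_sum (j : Fin L → ℕ) :
    ∑ i : Fin L, ((i : ℕ) + 1) * j i = ∑ i : Fin L, (i : ℕ) * j i + ∑ i, j i := by
  rw [← sum_add_distrib]
  exact sum_congr rfl fun i _ => by ring

theorem eq_zero_of_mem_multiIndices {j : Fin L → ℕ} (hj : j ∈ multiIndices L n k) {i : Fin L}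
    (hi : n - k < i) : j i = 0 := by
  obtain ⟨hk, hn⟩ := mem_multiIndices.1 hj
  have hle : (i : ℕ) * j i ≤ ∑ l : Fin L, (l : ℕ) * j l :=
    single_le_sum (f := fun l : Fin L => (l : ℕ) * j l) (fun _ _ => Nat.zero_le _) (mem_univ i)
  by_contra h0
  have : (i : ℕ) ≤ i * j i := Nat.le_mul_of_pos_right _ (Nat.pos_of_ne_zero h0)
  have := sum_succ_mul_eq_sum_mul_add_sum j
  omega

theorem bellPolyFin_eq_zero_of_lt (h : n < k) (x : ℕ → ℝ) : bellPolyFin L n k x = 0 := by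
  refine sum_eq_zero fun j hj => ?_
  obtain ⟨hk, hn⟩ := mem_multiIndices.1 hj
  have := sum_succ_mul_eq_sum_mul_add_sum j
  omega

theorem bellPolyFin_zero_right_of_ne_zero (hn : n ≠ 0) (x : ℕ → ℝ) :
    bellPolyFin L n 0 x = 0 := by
  refine sum_eq_zero fun j hj => ?_
  obtain ⟨hk, hn'⟩ := mem_multiIndices.1 hj
  have hj0 : ∀ i, j i = 0 := fun i => sum_eq_zero_iff.1 hk i (mem_univ i)
  simp [hj0] at hn'
  omega

theorem bellPolyFin_succ (hL : n - k < L) (x : ℕ → ℝ) :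
    bellPolyFin (L + 1) n k x = bellPolyFin L n k x := by
  have hlast {j} (hj : j ∈ multiIndices (L + 1) n k) : j (Fin.last L) = 0 :=
    eq_zero_of_mem_multiIndices hj (by simpa using hL)
  refine sum_nbij' Fin.init (Fin.snoc · 0) (fun j hj => ?_) (fun j hj => ?_)
    (fun j hj => ?_) (fun j _ => Fin.init_snoc _ _) (fun j hj => ?_)
  · have := mem_multiIndices.1 hj
    simp only [Fin.sum_univ_castSucc (n := L), hlast hj] at this
    exact mem_multiIndices.2 (by simpa [Fin.init] using this)
  · have := mem_multiIndices.1 hj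
    exact mem_multiIndices.2 (by simpa [Fin.sum_univ_castSucc] using this)
  · simpa [hlast hj] using Fin.snoc_init_self j
  · simp [term, Fin.prod_univ_castSucc, hlast hj, Fin.init]

theorem bellPoly_eq_bellPolyFin (hL : n - k < L) (x : ℕ → ℝ) :
    bellPoly n k x = bellPolyFin L n k x := by
  induction L, hL using Nat.le_induction with
  | base => rfl
  | succ L hL ih => rw [ih, bellPolyFin_succ hL]

theorem prod_add_single_one {M : Type*} [CommMonoid M] (f : Fin L → ℕ → M) (j : Fin L → ℕ)
    (i : Fin L) :
    ∏ l, f l ((j + Pi.single i 1 : Fin L → ℕ) l) = f i (j i + 1) * ∏ l ∈ {i}ᶜ, f l (j l) := by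
  rw [Fintype.prod_eq_mul_prod_compl i]
  congr 1
  · simp
  · refine prod_congr rfl fun l hl => ?_
    simp [(by simpa using hl : l ≠ i)]

theorem mul_term_add_single (x : ℕ → ℝ) (j : Fin L → ℕ) (i : Fin L) (hi : (i : ℕ) + 1 ≤ n) :
    ((j i : ℝ) + 1) * term L n x (j + Pi.single i 1 : Fin L → ℕ) =
      n.choose (i + 1) * x (i + 1) * term L (n - (i + 1)) x j := by
  have hfac : (n.factorial : ℝ) =
      n.choose (i + 1) * ((i : ℕ) + 1).factorial * (n - (i + 1)).factorial := by
    exact_mod_cast (Nat.choose_mul_factorial_mul_factorial hi).symm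
  simp only [term]
  rw [prod_add_single_one (fun _ m => (m.factorial : ℝ)),
    prod_add_single_one (fun l m => (x ((l : ℕ) + 1) / (((l : ℕ) + 1).factorial : ℝ)) ^ m),
    Fintype.prod_eq_mul_prod_compl i, Fintype.prod_eq_mul_prod_compl i (f := fun l => _ ^ _),
    hfac, Nat.factorial_succ (j i), pow_succ]
  have : (0 : ℝ) < ∏ l ∈ {i}ᶜ, ((j l).factorial : ℝ) := prod_pos fun l _ => by positivity
  field_simp
  push_cast
  ring

theorem add_single_mem_multiIndices_iff {j : Fin L → ℕ} {i : Fin L} :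
    j + Pi.single i 1 ∈ multiIndices L (n + (i + 1)) (k + 1) ↔ j ∈ multiIndices L n k := by
  simp [mem_multiIndices, sum_add_distrib, mul_add, Pi.single_apply]

/-- Removing one part of size `i + 1` maps the multi-indices of `B_{n,k+1}` with `j i ≠ 0`
bijectively onto those of `B_{n-i-1,k}`. -/
theorem sum_cast_mul_term (x : ℕ → ℝ) (i : Fin L) :
    ∑ j ∈ multiIndices L n (k + 1), (j i : ℝ) * term L n x j =
      n.choose (i + 1) * x (i + 1) * bellPolyFin L (n - (i + 1)) k x := by
  by_cases hi : (i : ℕ) + 1 ≤ n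
  · have hn : n - (i + 1) + (i + 1) = n := Nat.sub_add_cancel hi
    have hsub (j : Fin L → ℕ) (hji : j i ≠ 0) : j - Pi.single i 1 + Pi.single i 1 = j :=
      tsub_add_cancel_of_le fun l => by
        rcases eq_or_ne l i with rfl | h <;> simp [*, Nat.one_le_iff_ne_zero]
    rw [bellPolyFin, mul_sum,
      ← sum_filter_of_ne (p := fun j => j i ≠ 0) fun j _ h hz => h (by simp [hz])]
    refine (sum_nbij' (· + Pi.single i 1) (· - Pi.single i 1) (fun j hj => ?_) (fun j hj => ?_)
      (fun j _ => add_tsub_cancel_right j _) (fun j hj => ?_) (fun j hj => ?_)).symm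
    · exact mem_filter.2 ⟨hn ▸ add_single_mem_multiIndices_iff.2 hj, by simp⟩
    · obtain ⟨hj, hji⟩ := mem_filter.1 hj
      rw [← hn, ← hsub j hji] at hj
      exact add_single_mem_multiIndices_iff.1 hj
    · exact hsub j (mem_filter.1 hj).2
    · rw [← mul_term_add_single x j i hi]
      simp
  · have hzero : ∀ j ∈ multiIndices L n (k + 1), j i = 0 := fun j hj => by
      have hle : ((i : ℕ) + 1) * j i ≤ n := (mem_multiIndices.1 hj).2 ▸
        single_le_sum (f := fun l : Fin L => ((l : ℕ) + 1) * j l) (fun _ _ => Nat.zero_le _)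
          (mem_univ i)
      by_contra h0
      have : (i : ℕ) + 1 ≤ (i + 1) * j i := Nat.le_mul_of_pos_right _ (Nat.pos_of_ne_zero h0)
      omega
    rw [sum_eq_zero fun j hj => by simp [hzero j hj], Nat.choose_eq_zero_of_lt (not_le.1 hi)]
    simp

theorem sum_affine_mul_choose_mul_bellPolyFin (a b : ℝ) (x : ℕ → ℝ) :
    ∑ i : Fin L, (a * ((i : ℕ) + 1) + b) * n.choose (i + 1) * x (i + 1) *
        bellPolyFin L (n - (i + 1)) k x =
      (a * n + b * (k + 1)) * bellPolyFin L n (k + 1) x := by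
  rw [bellPolyFin, mul_sum]
  calc _ = ∑ i : Fin L, ∑ j ∈ multiIndices L n (k + 1),
        (a * ((i : ℕ) + 1) + b) * ((j i : ℝ) * term L n x j) :=
        sum_congr rfl fun i _ => by rw [← mul_sum, sum_cast_mul_term]; ring
    _ = ∑ j ∈ multiIndices L n (k + 1), (a * n + b * (k + 1)) * term L n x j := by
      rw [sum_comm]
      refine sum_congr rfl fun j hj => ?_
      obtain ⟨hk, hn⟩ := mem_multiIndices.1 hj
      have hk' : ∑ i : Fin L, (j i : ℝ) = k + 1 := by exact_mod_cast hk
      have hn' : ∑ i : Fin L, ((i : ℝ) + 1) * j i = n := by exact_mod_cast hn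
      rw [← hk', ← hn', mul_sum, mul_sum, ← sum_add_distrib, sum_mul]
      exact sum_congr rfl fun i _ => by ring

theorem sum_range_affine_mul_choose_mul_bellPoly (a b : ℝ) (n k : ℕ) (x : ℕ → ℝ) :
    ∑ m ∈ range n, (a * (m + 1) + b) * n.choose (m + 1) * x (m + 1) *
        bellPoly (n - (m + 1)) k x =
      (a * n + b * (k + 1)) * bellPoly n (k + 1) x := by
  rw [bellPoly_eq_bellPolyFin (L := n + 1) (by omega), ← sum_affine_mul_choose_mul_bellPolyFin,
    Fin.sum_univ_eq_sum_range (fun m => (a * (m + 1) + b) * n.choose (m + 1) * x (m + 1) *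
        bellPolyFin (n + 1) (n - (m + 1)) k x), sum_range_succ, Nat.choose_succ_self]
  simp only [Nat.cast_zero, mul_zero, zero_mul, add_zero]
  exact sum_congr rfl fun m _ => by rw [bellPoly_eq_bellPolyFin (L := n + 1) (by omega)]

theorem bellPoly_eq_zero_of_lt (h : n < k) (x : ℕ → ℝ) : bellPoly n k x = 0 :=
  (bellPoly_eq_bellPolyFin (Nat.lt_succ_self _) x).trans (bellPolyFin_eq_zero_of_lt h x)

theorem natCast_mul_bellPoly_zero (n : ℕ) (x : ℕ → ℝ) : (n : ℝ) * bellPoly n 0 x = 0 := by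
  rcases eq_or_ne n 0 with rfl | hn
  · simp
  · rw [bellPoly_eq_bellPolyFin (Nat.lt_succ_self _), bellPolyFin_zero_right_of_ne_zero hn,
      mul_zero]

end PartialBell

open PartialBell

noncomputable def bellFactorialSum (n N : ℕ) (x : ℕ → ℝ) : ℝ :=
  ∑ K ∈ range (n + 1), ((N + K).factorial : ℝ) * bellPoly n K x

theorem bellFactorialSum_eq_sum_range {n L : ℕ} (h : n < L) (N : ℕ) (x : ℕ → ℝ) :
    bellFactorialSum n N x = ∑ K ∈ range L, ((N + K).factorial : ℝ) * bellPoly n K x :=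
  sum_subset (range_subset_range.2 h) fun K hK hK' => by
    rw [bellPoly_eq_zero_of_lt (by simp at hK hK'; omega), mul_zero]

theorem sum_affine_mul_choose_mul_bellFactorialSum {x : ℕ → ℝ} (hx : x 0 = -1) (a b : ℝ)
    (n N : ℕ) :
    ∑ j ∈ range (n + 1), (a * j + b) * n.choose j * x j * bellFactorialSum (n - j) (N + 1) x =
      (a * n - b * (N + 1)) * bellFactorialSum n N x := by
  calc _ = ∑ m ∈ range n, (a * (m + 1) + b) * n.choose (m + 1) * x (m + 1) *
          bellFactorialSum (n - (m + 1)) (N + 1) x - b * bellFactorialSum n (N + 1) x := by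
        rw [sum_range_succ', hx, Nat.choose_zero_right, Nat.sub_zero]
        push_cast
        ring
    _ = ∑ K ∈ range n,
          ((N + (K + 1)).factorial : ℝ) * ((a * n + b * (K + 1)) * bellPoly n (K + 1) x)
          - b * bellFactorialSum n (N + 1) x := by
        congr 1
        calc _ = ∑ m ∈ range n, ∑ K ∈ range n, ((N + 1 + K).factorial : ℝ) *
              ((a * (m + 1) + b) * n.choose (m + 1) * x (m + 1) * bellPoly (n - (m + 1)) K x) := by
              refine sum_congr rfl fun m hm => ?_
              rw [bellFactorialSum_eq_sum_range (L := n) (by simp at hm; omega), mul_sum]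
              exact sum_congr rfl fun K _ => by ring
          _ = _ := by
              rw [sum_comm]
              refine sum_congr rfl fun K _ => ?_
              rw [← mul_sum, sum_range_affine_mul_choose_mul_bellPoly,
                show N + 1 + K = N + (K + 1) by omega]
    _ = ∑ K ∈ range (n + 1), ((N + K).factorial : ℝ) * ((a * n + b * K) * bellPoly n K x)
          - b * bellFactorialSum n (N + 1) x := by
        rw [sum_range_succ' _ n]
        push_cast
        linear_combination (-(N.factorial : ℝ) * a) * natCast_mul_bellPoly_zero n x
    _ = _ := by
        rw [bellFactorialSum, bellFactorialSum, mul_sum, mul_sum, ← sum_sub_distrib]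
        refine sum_congr rfl fun K _ => ?_
        rw [add_right_comm, Nat.factorial_succ]
        push_cast
        ring

theorem df_zero : df 0 = 1 := by norm_num [df]

theorem df_succ (j : ℕ) : df (j + 1) = (2 * j + 3) * df j := by
  simp only [df, show 2 * (j + 1) + 1 = 2 * j + 1 + 1 + 1 by ring, Nat.factorial_succ, pow_succ]
  push_cast
  field_simp
  ring

noncomputable def bellArg (ρs : ℕ → ℝ) (r : ℕ) : ℝ := -(df r * ρs r) / ((r + 1) * ρs 0)

theorem bellArg_zero {ρs : ℕ → ℝ} (hρ : ρs 0 ≠ 0) : bellArg ρs 0 = -1 := by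
  simp [bellArg, df_zero, hρ]

theorem df_succ_mul {ρs : ℕ → ℝ} (hρ : ρs 0 ≠ 0) (j : ℕ) :
    df (j + 1) * ρs j = -((2 * j + 3) * (j + 1) * ρs 0 * bellArg ρs j) := by
  rw [df_succ, bellArg]
  field_simp

theorem gam_add_add_three (ρs : ℕ → ℝ) (m N : ℕ) :
    gam ρs (m + N + 3) m = (ρs 0 ^ (m + N))⁻¹ * ((N.factorial : ℝ) * m.factorial)⁻¹ *
      bellFactorialSum N (m + N) (bellArg ρs) := by
  rw [gam, if_pos ⟨by omega, by positivity, by push_cast; omega⟩]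
  simp only [Int.toNat_natCast, show m + N + 3 - 3 = m + N by omega, Nat.add_sub_cancel_left,
    bellFactorialSum, mul_sum, mul_assoc]
  refine sum_congr rfl fun K _ => ?_
  unfold bellArg
  ring

theorem choose_mul_df_mul_gam {ρs : ℕ → ℝ} (hρ : ρs 0 ≠ 0) {M n j : ℕ} (hj : j ≤ n) :
    ((M + 1 + j).choose (j + 1) : ℝ) * df (j + 1) * ρs j * gam ρs (M + n + 4) ((M : ℤ) + 1 + j) =
      -((ρs 0 ^ (M + n))⁻¹ * ((n.factorial : ℝ) * M.factorial)⁻¹) *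
        ((2 * j + 3) * n.choose j * bellArg ρs j *
          bellFactorialSum (n - j) (M + n + 1) (bellArg ρs)) := by
  rw [show M + n + 4 = M + 1 + j + (n - j) + 3 by omega,
    show (M : ℤ) + 1 + j = ((M + 1 + j : ℕ) : ℤ) by push_cast; ring, gam_add_add_three,
    show M + 1 + j + (n - j) = M + n + 1 by omega, mul_assoc _ (df _), df_succ_mul hρ,
    Nat.cast_choose ℝ (by omega : j + 1 ≤ M + 1 + j), Nat.cast_choose ℝ hj,
    show M + 1 + j - (j + 1) = M by omega, Nat.factorial_succ j, pow_succ]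
  push_cast
  field_simp

theorem stmt_13 (ρs : ℕ → ℝ) (hρ : ρs 0 ≠ 0) (B M : ℕ) (hB : 4 ≤ B) (hM : M ≤ B - 4) :
    ∑ j ∈ Finset.range (B - 4 - M + 1),
      (((M + 1 + j).choose (j + 1) : ℕ) : ℝ) * df (j + 1) * ρs j * gam ρs B ((M : ℤ) + 1 + j)
    = (2 * (M : ℝ) + B - 1) * gam ρs (B - 1) (M : ℤ) := by
  obtain ⟨n, rfl⟩ : ∃ n, B = M + n + 4 := ⟨B - 4 - M, by omega⟩
  rw [show M + n + 4 - 4 - M = n by omega,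
    sum_congr rfl fun j hj => choose_mul_df_mul_gam hρ (Nat.lt_succ_iff.1 (mem_range.1 hj)),
    ← mul_sum, sum_affine_mul_choose_mul_bellFactorialSum (bellArg_zero hρ),
    show M + n + 4 - 1 = M + n + 3 by omega, gam_add_add_three]
  push_cast
  ring
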